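/- Assume q_n ≥ c > 0 for all n ∈ ℤ₀. If y = (y_n)_{n∈ℤ} is a solution of problem (P) whose restriction to ℤ₀ is square-summable (∑_{n∈ℤ₀} |y_n|² < ∞), then y_n = 0 for all n ∈ ℤ. Consequently the operator L : D ⊂ l₀² → l₀² has trivial kernel and is injective. -/

import Mathlib

open ComplexConjugate

/-- The index set ℤ₀ = ℤ \ {0,1} as a subtype. -/
abbrev Z0 := {n : ℤ // n ≠ 0 ∧ n ≠ 1}

noncomputable def e2 (δ : ℝ) : ℂ := Complex.exp (2 * (δ : ℂ) * Complex.I)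

/-- Extension of y : ℤ → ℂ by the auxiliary values y₁ = y_{−1} and
y₀ = (1 − e^{2iδ}) y_{−1} + e^{2iδ} y₂ coming from the impulse conditions. -/
noncomputable def ext (δ : ℝ) (y : ℤ → ℂ) : ℤ → ℂ := fun n =>
  if n = 0 then (1 - e2 δ) * y (-1) + e2 δ * y 2
  else if n = 1 then y (-1)
  else y n

/-- (Ly)_n = −Δ²y_{n−1} + q_n y_n for n ∈ ℤ₀, using the auxiliary values. -/
noncomputable def Lop (δ : ℝ) (q : ℤ → ℝ) (y : ℤ → ℂ) (n : ℤ) : ℂ :=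
  -(ext δ y (n + 1) - 2 * ext δ y n + ext δ y (n - 1)) + (q n : ℂ) * y n

/-- Membership in the domain D = { y ∈ l₀² : (qₙ yₙ) ∈ l₀² }. -/
def MemD (q : ℤ → ℝ) (y : ℤ → ℂ) : Prop :=
  Summable (fun n : Z0 => ‖y (n : ℤ)‖ ^ 2) ∧
  Summable (fun n : Z0 => ‖(q (n : ℤ) : ℂ) * y (n : ℤ)‖ ^ 2)


/- Problem (P): −Δ²y_{n−1} + q_n y_n = 0 on ℤ₀ = ℤ \ {0,1}, with impulse conditions
   y_{−1} = y₁, Δy_{−1} = e^{2iδ} Δy₁, for a sequence y : ℤ → ℂ. -/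
def IsSolP (δ : ℝ) (q : ℤ → ℝ) (y : ℤ → ℂ) : Prop :=
  (∀ n : ℤ, n ≠ 0 → n ≠ 1 →
    -(y (n + 1) - 2 * y n + y (n - 1)) + (q n : ℂ) * y n = 0) ∧
  y (-1) = y 1 ∧
  y 0 - y (-1) = e2 δ * (y 2 - y 1)

/-!
For a solution `y` of (P) put `B n = Δyₙ · conj yₙ`. Summation by parts (a discrete Green
identity) gives `B n - B (n - 1) = qₙ |yₙ|² + |Δyₙ₋₁|² ≥ 0` for `n ∈ ℤ₀`. Square summability
makes `B n → 0` as `n → ±∞`, so telescoping over `n ≥ 2` and over `n ≤ -1` yields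
`B 1 = -S₊` and `B (-1) = S₋` with nonnegative total energies `S±`. The impulse conditions
give `B (-1) = e^{2iδ} B 1`, i.e. `S₋ + e^{2iδ} S₊ = 0`; since `|e^{2iδ}| = 1` and
`e^{2iδ} ≠ -1` for `0 ≤ δ < π/2`, both energies vanish, and `qₙ > 0` forces `y = 0` on `ℤ₀`,
hence everywhere. An element of the kernel of `L`, completed by its auxiliary values, solves (P).
-/

open Filter Topology

lemma tendsto_cofinite_zero_of_summable_norm_sq {y : ℤ → ℂ}
    (hsum : Summable (fun n : Z0 => ‖y n‖ ^ 2)) : Tendsto y cofinite (𝓝 0) := by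
  have hsumℤ : Summable (fun n : ℤ => ‖y n‖ ^ 2) := by
    rw [← (Set.toFinite {0, 1}).summable_compl_iff]
    exact (Equiv.subtypeEquivRight (fun n => by simp)).summable_iff.mpr hsum
  rw [tendsto_zero_iff_norm_tendsto_zero]
  simpa only [Function.comp_def, Real.sqrt_sq (norm_nonneg _), Real.sqrt_zero] using
    (Real.continuous_sqrt.tendsto 0).comp hsumℤ.tendsto_cofinite_zero

lemma exists_hasSum_of_increments_of_tendsto_zero {u : ℕ → ℂ} {g : ℕ → ℝ} (hg : ∀ k, 0 ≤ g k)
    (hu : ∀ k, u (k + 1) = u k + g k) (hlim : Tendsto u atTop (𝓝 0)) :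
    ∃ S : ℝ, HasSum g S ∧ u 0 = -S := by
  have hpartial : ∀ n, ((∑ k ∈ Finset.range n, g k : ℝ) : ℂ) = u n - u 0 := by
    intro n
    induction n with
    | zero => simp
    | succ n ih => rw [hu, Finset.sum_range_succ]; push_cast at ih ⊢; rw [ih]; ring
  have hsums : Tendsto (fun n => ((∑ k ∈ Finset.range n, g k : ℝ) : ℂ)) atTop (𝓝 (-u 0)) := by
    simpa only [hpartial, zero_sub] using hlim.sub_const (u 0)
  refine ⟨(-u 0).re, (hasSum_iff_tendsto_nat_of_nonneg hg _).mpr ?_, ?_⟩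
  · simpa only [Function.comp_def, Complex.ofReal_re] using
      (Complex.continuous_re.tendsto _).comp hsums
  · have him : (-u 0).im = 0 := tendsto_nhds_unique
      ((Complex.continuous_im.tendsto _).comp hsums) (by simp [Function.comp_def])
    apply Complex.ext <;> simp_all

lemma eq_zero_of_ofReal_add_mul_ofReal_eq_zero {e : ℂ} (he : ‖e‖ = 1) (he' : e ≠ -1)
    {a b : ℝ} (ha : 0 ≤ a) (hb : 0 ≤ b) (h : (a : ℂ) + e * b = 0) : a = 0 ∧ b = 0 := by
  have hab : a = b := by
    have hnorm := congrArg norm (eq_neg_of_add_eq_zero_left h)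
    rwa [norm_neg, norm_mul, he, one_mul, Complex.norm_real, Complex.norm_real,
      Real.norm_of_nonneg ha, Real.norm_of_nonneg hb] at hnorm
  subst hab
  have ha0 : (a : ℂ) * (1 + e) = 0 := by linear_combination h
  have h1e : 1 + e ≠ 0 := fun h => he' (by linear_combination h)
  have ha : a = 0 := by exact_mod_cast (mul_eq_zero.mp ha0).resolve_right h1e
  exact ⟨ha, ha⟩

lemma e2_eq_exp (δ : ℝ) : e2 δ = Complex.exp (↑(2 * δ) * Complex.I) := by
  rw [e2]; push_cast; ring_nf

lemma norm_e2 (δ : ℝ) : ‖e2 δ‖ = 1 := by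
  rw [e2_eq_exp, Complex.norm_exp_ofReal_mul_I]

lemma e2_ne_neg_one {δ : ℝ} (hδ : 0 ≤ δ ∧ δ < Real.pi / 2) : e2 δ ≠ -1 := by
  intro h
  have hcos : Real.cos (2 * δ) = -1 := by
    have hre := congrArg Complex.re h
    rwa [e2_eq_exp, Complex.exp_ofReal_mul_I_re, Complex.neg_re, Complex.one_re] at hre
  have := Real.cos_lt_cos_of_nonneg_of_le_pi (by linarith) le_rfl (by linarith : 2 * δ < Real.pi)
  rw [Real.cos_pi] at this
  linarith

noncomputable def boundaryForm (y : ℤ → ℂ) (n : ℤ) : ℂ := (y (n + 1) - y n) * conj (y n)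

noncomputable def energyDensity (q : ℤ → ℝ) (y : ℤ → ℂ) (n : ℤ) : ℝ :=
  q n * ‖y n‖ ^ 2 + ‖y n - y (n - 1)‖ ^ 2

lemma boundaryForm_eq_add {q : ℤ → ℝ} {y : ℤ → ℂ} {n : ℤ}
    (h : -(y (n + 1) - 2 * y n + y (n - 1)) + (q n : ℂ) * y n = 0) :
    boundaryForm y n = boundaryForm y (n - 1) + energyDensity q y n := by
  simp only [boundaryForm, energyDensity, sub_add_cancel]
  push_cast
  rw [← Complex.mul_conj', ← Complex.mul_conj', map_sub]
  linear_combination -conj (y n) * h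

lemma energyDensity_nonneg {q : ℤ → ℝ} (y : ℤ → ℂ) {n : ℤ} (hq : 0 ≤ q n) :
    0 ≤ energyDensity q y n := by
  unfold energyDensity; positivity

lemma eq_zero_of_energyDensity_eq_zero {q : ℤ → ℝ} {y : ℤ → ℂ} {n : ℤ} (hq : 0 < q n)
    (h : energyDensity q y n = 0) : y n = 0 := by
  unfold energyDensity at h
  have hqy : q n * ‖y n‖ ^ 2 = 0 := by nlinarith [sq_nonneg ‖y n - y (n - 1)‖, sq_nonneg ‖y n‖]
  simpa [hq.ne'] using hqy

lemma tendsto_boundaryForm_cofinite {y : ℤ → ℂ} (hy : Tendsto y cofinite (𝓝 0)) :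
    Tendsto (boundaryForm y) cofinite (𝓝 0) := by
  have hshift : Tendsto (fun n => y (n + 1)) cofinite (𝓝 0) :=
    hy.comp (add_left_injective 1).tendsto_cofinite
  have h := (hshift.sub hy).mul ((Complex.continuous_conj.tendsto 0).comp hy)
  rwa [sub_zero, map_zero, mul_zero] at h

lemma IsSolP.boundaryForm_neg_one {δ : ℝ} {q : ℤ → ℝ} {y : ℤ → ℂ} (hy : IsSolP δ q y) :
    boundaryForm y (-1) = e2 δ * boundaryForm y 1 := by
  obtain ⟨-, hy1, hy0⟩ := hy
  rw [boundaryForm, boundaryForm, neg_add_cancel, one_add_one_eq_two, hy0, hy1, mul_assoc]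

lemma tendsto_natCast_add_cofinite (m : ℤ) :
    Tendsto (fun k : ℕ => (k : ℤ) + m) atTop cofinite := by
  rw [← Nat.cofinite_eq_atTop]
  exact Function.Injective.tendsto_cofinite fun a b h => by simpa using h

lemma tendsto_neg_natCast_sub_cofinite (m : ℤ) :
    Tendsto (fun k : ℕ => -(k : ℤ) - m) atTop cofinite := by
  rw [← Nat.cofinite_eq_atTop]
  exact Function.Injective.tendsto_cofinite fun a b h => by simpa using h

section Solution

variable {δ : ℝ} {q : ℤ → ℝ} {y : ℤ → ℂ}

lemma IsSolP.exists_hasSum_energyDensity_right (hy : IsSolP δ q y)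
    (hq : ∀ n : ℤ, n ≠ 0 → n ≠ 1 → 0 ≤ q n) (hlim : Tendsto y cofinite (𝓝 0)) :
    ∃ S : ℝ, HasSum (fun k : ℕ => energyDensity q y (k + 2)) S ∧ boundaryForm y 1 = -S := by
  obtain ⟨S, hS, hB⟩ := exists_hasSum_of_increments_of_tendsto_zero
    (u := fun k : ℕ => boundaryForm y (k + 1)) (g := fun k => energyDensity q y (k + 2))
    (fun k => energyDensity_nonneg y (hq _ (by omega) (by omega)))
    (fun k => by
      have h := boundaryForm_eq_add (hy.1 (k + 2) (by omega) (by omega))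
      rw [show (k : ℤ) + 2 - 1 = k + 1 by ring] at h
      rw [Nat.cast_succ, ← h]
      ring_nf)
    ((tendsto_boundaryForm_cofinite hlim).comp (tendsto_natCast_add_cofinite 1))
  exact ⟨S, hS, by simpa using hB⟩

lemma IsSolP.exists_hasSum_energyDensity_left (hy : IsSolP δ q y)
    (hq : ∀ n : ℤ, n ≠ 0 → n ≠ 1 → 0 ≤ q n) (hlim : Tendsto y cofinite (𝓝 0)) :
    ∃ S : ℝ, HasSum (fun k : ℕ => energyDensity q y (-k - 1)) S ∧ boundaryForm y (-1) = S := by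
  obtain ⟨S, hS, hB⟩ := exists_hasSum_of_increments_of_tendsto_zero
    (u := fun k : ℕ => -boundaryForm y (-k - 1)) (g := fun k => energyDensity q y (-k - 1))
    (fun k => energyDensity_nonneg y (hq _ (by omega) (by omega)))
    (fun k => by
      have h := boundaryForm_eq_add (hy.1 (-k - 1) (by omega) (by omega))
      rw [show -(k : ℤ) - 1 - 1 = -↑(k + 1) - 1 by push_cast; ring] at h
      linear_combination h)
    (by simpa using ((tendsto_boundaryForm_cofinite hlim).comp
      (tendsto_neg_natCast_sub_cofinite 1)).neg)
  exact ⟨S, hS, by simpa using hB⟩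

lemma IsSolP.energyDensity_eq_zero (hδ : 0 ≤ δ ∧ δ < Real.pi / 2)
    (hq : ∀ n : ℤ, n ≠ 0 → n ≠ 1 → 0 ≤ q n) (hy : IsSolP δ q y)
    (hlim : Tendsto y cofinite (𝓝 0)) {n : ℤ} (h0 : n ≠ 0) (h1 : n ≠ 1) :
    energyDensity q y n = 0 := by
  have hE : ∀ n : ℤ, n ≠ 0 → n ≠ 1 → 0 ≤ energyDensity q y n :=
    fun n h0 h1 => energyDensity_nonneg y (hq n h0 h1)
  obtain ⟨Sr, hSr, hBr⟩ := hy.exists_hasSum_energyDensity_right hq hlim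
  obtain ⟨Sl, hSl, hBl⟩ := hy.exists_hasSum_energyDensity_left hq hlim
  have hSlr : (Sl : ℂ) + e2 δ * Sr = 0 := by
    rw [← hBl, hy.boundaryForm_neg_one, hBr]
    ring
  obtain ⟨rfl, rfl⟩ := eq_zero_of_ofReal_add_mul_ofReal_eq_zero (norm_e2 δ) (e2_ne_neg_one hδ)
    (hSl.nonneg fun k => hE _ (by omega) (by omega))
    (hSr.nonneg fun k => hE _ (by omega) (by omega)) hSlr
  rw [hasSum_zero_iff_of_nonneg fun k => hE _ (by omega) (by omega)] at hSr hSl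
  rcases le_or_gt 2 n with hn | hn
  · have h := congrFun hSr (n - 2).toNat
    rwa [show ((n - 2).toNat : ℤ) + 2 = n by omega] at h
  · have h := congrFun hSl (-1 - n).toNat
    rwa [show -((-1 - n).toNat : ℤ) - 1 = n by omega] at h

lemma IsSolP.eq_zero_of_eq_zero_on_Z0 (hy : IsSolP δ q y)
    (hZ0 : ∀ n : ℤ, n ≠ 0 → n ≠ 1 → y n = 0) (n : ℤ) : y n = 0 := by
  have hym1 := hZ0 (-1) (by norm_num) (by norm_num)
  have hy1 : y 1 = 0 := hy.2.1 ▸ hym1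
  by_cases h0 : n = 0
  · subst h0
    linear_combination hy.2.2 + hym1 + e2 δ * hZ0 2 (by norm_num) (by norm_num) - e2 δ * hy1
  by_cases h1 : n = 1
  · exact h1 ▸ hy1
  exact hZ0 n h0 h1

lemma IsSolP.eq_zero (hδ : 0 ≤ δ ∧ δ < Real.pi / 2) (hq : ∀ n : ℤ, n ≠ 0 → n ≠ 1 → 0 < q n)
    (hy : IsSolP δ q y) (hsum : Summable (fun n : Z0 => ‖y n‖ ^ 2)) (n : ℤ) : y n = 0 :=
  hy.eq_zero_of_eq_zero_on_Z0 (fun m h0 h1 => eq_zero_of_energyDensity_eq_zero (hq m h0 h1)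
    (hy.energyDensity_eq_zero hδ (fun n h0 h1 => (hq n h0 h1).le)
      (tendsto_cofinite_zero_of_summable_norm_sq hsum) h0 h1)) n

end Solution

lemma ext_eq_self {δ : ℝ} {y : ℤ → ℂ} {n : ℤ} (h0 : n ≠ 0) (h1 : n ≠ 1) : ext δ y n = y n := by
  simp [ext, h0, h1]

lemma isSolP_ext_of_Lop_eq_zero {δ : ℝ} {q : ℤ → ℝ} {y : ℤ → ℂ}
    (hL : ∀ n : ℤ, n ≠ 0 → n ≠ 1 → Lop δ q y n = 0) : IsSolP δ q (ext δ y) := by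
  refine ⟨fun n h0 h1 => ?_, ?_, ?_⟩
  · simpa only [Lop, ext_eq_self h0 h1] using hL n h0 h1
  · simp only [ext, Int.reduceNeg, neg_eq_zero, one_ne_zero, ↓reduceIte, reduceCtorEq]
  · simp only [ext, ↓reduceIte, Int.reduceNeg, neg_eq_zero, one_ne_zero, reduceCtorEq,
      OfNat.ofNat_ne_zero, OfNat.ofNat_ne_one]
    ring

/-- if q_n ≥ c > 0 on ℤ₀, then every solution of (P) that is square
summable over ℤ₀ vanishes identically; consequently the operator L has trivial
kernel and is injective. -/
theorem kernel_trivial (δ : ℝ) (hδ : 0 ≤ δ ∧ δ < Real.pi / 2)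
    (q : ℤ → ℝ) (c : ℝ) (hc : 0 < c) (hq : ∀ n : ℤ, n ≠ 0 → n ≠ 1 → c ≤ q n) :
    (∀ y : ℤ → ℂ, IsSolP δ q y → Summable (fun n : Z0 => ‖y (n : ℤ)‖ ^ 2) →
      ∀ n : ℤ, y n = 0) ∧
    (∀ y : ℤ → ℂ, MemD q y → (∀ n : ℤ, n ≠ 0 → n ≠ 1 → Lop δ q y n = 0) →
      ∀ n : ℤ, n ≠ 0 → n ≠ 1 → y n = 0) := by
  have hqpos : ∀ n : ℤ, n ≠ 0 → n ≠ 1 → 0 < q n := fun n h0 h1 => hc.trans_le (hq n h0 h1)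
  refine ⟨fun y hy hsum => hy.eq_zero hδ hqpos hsum, fun y hD hL n h0 h1 => ?_⟩
  have hsum : Summable (fun m : Z0 => ‖ext δ y m‖ ^ 2) :=
    hD.1.congr fun m => by rw [ext_eq_self m.2.1 m.2.2]
  rw [← ext_eq_self (δ := δ) (y := y) h0 h1]
  exact (isSolP_ext_of_Lop_eq_zero hL).eq_zero hδ hqpos hsum n
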